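/- arXiv:0911.4321 — 2 statements merged into one kernel-verified Lean document; each statement's English description precedes it below -/
import Mathlib

section
/- Let a, b > 0 with a ≠ b and C_2 ≥ 0. Suppose f : [r_0, ∞) → ℝ is a differentiable function with f(r) ≥ 0 satisfying f(r) ≤ -(r/a) f'(r) + C_2 r^{-b} for all r ≥ r_0 > 0. Then there exists a constant C_3 such that f(r) ≤ C_3 r^{-a} + (a C_2 / (a-b)) r^{-b} for all r ≥ r_0; in particular f(r) = O(r^{-min{a,b}}) as r → ∞. -/
open Filter Asymptotics

/-!
Multiplying the differential inequality by the integrating factor `a r^(a-1)` shows that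
`r^a f(r) - (a C₂/(a-b)) r^(a-b)` is nonincreasing on `[r₀, ∞)`; bounding it by its value at `r₀`
and dividing by `r^a` gives the explicit bound, and for `r ≥ 1` both `r^(-a)` and `r^(-b)` are
at most `r^(-min a b)`.
-/

lemma hasDerivAt_rpow_mul_sub_rpow {a b C r f' : ℝ} {f : ℝ → ℝ} (ha : a ≠ 0) (hab : a ≠ b)
    (hr : 0 < r) (hf : HasDerivAt f f' r) :
    HasDerivAt (fun x => x ^ a * f x - a * C / (a - b) * x ^ (a - b))
      (a * r ^ (a - 1) * (f r + r / a * f' - C * r ^ (-b))) r := by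
  have hpow (p : ℝ) : HasDerivAt (fun x : ℝ => x ^ p) (p * r ^ (p - 1)) r :=
    Real.hasDerivAt_rpow_const (Or.inl hr.ne')
  refine (((hpow a).mul hf).sub ((hpow (a - b)).const_mul (a * C / (a - b)))).congr_deriv ?_
  have hab' : a - b ≠ 0 := sub_ne_zero.mpr hab
  rw [show a - b - 1 = (a - 1) + -b by ring, Real.rpow_add hr,
    show r ^ a = r ^ (a - 1) * r by rw [← Real.rpow_add_one hr.ne']; ring_nf]
  field_simp

lemma antitoneOn_rpow_mul_sub_rpow {a b C r₀ : ℝ} {f : ℝ → ℝ} (ha : 0 < a) (hab : a ≠ b)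
    (hr₀ : 0 < r₀) (hdiff : ∀ r, r₀ ≤ r → DifferentiableAt ℝ f r)
    (hineq : ∀ r, r₀ ≤ r → f r ≤ -(r / a) * deriv f r + C * r ^ (-b)) :
    AntitoneOn (fun r => r ^ a * f r - a * C / (a - b) * r ^ (a - b)) (Set.Ici r₀) := by
  have hderiv (r : ℝ) (hr : r₀ ≤ r) := hasDerivAt_rpow_mul_sub_rpow (C := C) ha.ne' hab
    (hr₀.trans_le hr) (hdiff r hr).hasDerivAt
  refine antitoneOn_of_deriv_nonpos (convex_Ici r₀)
    (fun r hr => (hderiv r hr).continuousAt.continuousWithinAt) ?_ ?_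
  · rw [interior_Ici]
    exact fun r hr => (hderiv r hr.le).differentiableAt.differentiableWithinAt
  · rw [interior_Ici]
    intro r hr
    rw [(hderiv r hr.le).deriv]
    have := hineq r hr.le
    exact mul_nonpos_of_nonneg_of_nonpos (by positivity [hr₀.trans hr]) (by linarith)

lemma le_mul_rpow_neg_add_of_rpow_mul_sub_le {a b c K r y : ℝ} (hr : 0 < r)
    (h : r ^ a * y - K * r ^ (a - b) ≤ c) : y ≤ c * r ^ (-a) + K * r ^ (-b) := by
  have hsplit : y = (r ^ a * y - K * r ^ (a - b)) * r ^ (-a) + K * r ^ (-b) := by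
    have hra : r ^ a ≠ 0 := by positivity
    rw [Real.rpow_neg hr.le, Real.rpow_neg hr.le, Real.rpow_sub hr]
    field_simp
    ring
  calc y = (r ^ a * y - K * r ^ (a - b)) * r ^ (-a) + K * r ^ (-b) := hsplit
    _ ≤ c * r ^ (-a) + K * r ^ (-b) := by gcongr

lemma isBigO_rpow_rpow_atTop_of_le {s t : ℝ} (h : s ≤ t) :
    (fun x : ℝ => x ^ s) =O[atTop] fun x => x ^ t := by
  refine IsBigO.of_bound' ?_
  filter_upwards [eventually_ge_atTop 1] with x hx
  rw [Real.norm_of_nonneg (by positivity), Real.norm_of_nonneg (by positivity)]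
  exact Real.rpow_le_rpow_of_exponent_le hx h

lemma isBigO_rpow_neg_min_of_le_mul_rpow_neg_add {a b c K : ℝ} {f : ℝ → ℝ}
    (hf0 : ∀ᶠ r in atTop, 0 ≤ f r) (hle : ∀ᶠ r in atTop, f r ≤ c * r ^ (-a) + K * r ^ (-b)) :
    f =O[atTop] fun r : ℝ => r ^ (-min a b) := by
  have hbound : f =O[atTop] fun r : ℝ => c * r ^ (-a) + K * r ^ (-b) := by
    refine IsBigO.of_bound' ?_
    filter_upwards [hf0, hle] with r h0 h1
    rw [Real.norm_of_nonneg h0]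
    exact h1.trans (le_abs_self _)
  refine hbound.trans (IsBigO.add ?_ ?_)
  · exact (isBigO_rpow_rpow_atTop_of_le (neg_le_neg (min_le_left a b))).const_mul_left c
  · exact (isBigO_rpow_rpow_atTop_of_le (neg_le_neg (min_le_right a b))).const_mul_left K

theorem ode_decay_neq_general
    (a b C2 r0 : ℝ) (ha : 0 < a) (hab : a ≠ b)
    (hr0 : 0 < r0) (f : ℝ → ℝ)
    (hf0 : ∀ r, r0 ≤ r → 0 ≤ f r)
    (hdiff : ∀ r, r0 ≤ r → DifferentiableAt ℝ f r)
    (hineq : ∀ r, r0 ≤ r → f r ≤ -(r / a) * deriv f r + C2 * r ^ (-b)) :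
    (∃ C3 : ℝ, ∀ r, r0 ≤ r → f r ≤ C3 * r ^ (-a) + (a * C2 / (a - b)) * r ^ (-b)) ∧
      f =O[atTop] fun r : ℝ => r ^ (-min a b) := by
  have hanti := antitoneOn_rpow_mul_sub_rpow ha hab hr0 hdiff hineq
  have hbound (r : ℝ) (hr : r0 ≤ r) :
      f r ≤ (r0 ^ a * f r0 - a * C2 / (a - b) * r0 ^ (a - b)) * r ^ (-a)
        + (a * C2 / (a - b)) * r ^ (-b) :=
    le_mul_rpow_neg_add_of_rpow_mul_sub_le (hr0.trans_le hr)
      (hanti Set.self_mem_Ici hr hr)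
  exact ⟨⟨_, hbound⟩, isBigO_rpow_neg_min_of_le_mul_rpow_neg_add
    (eventually_ge_atTop r0 |>.mono hf0) (eventually_ge_atTop r0 |>.mono hbound)⟩

/-- **ODE Lemma, case (a).** If `a, b > 0`, `a ≠ b`, `C₂ ≥ 0` and a differentiable
`f ≥ 0` on `[r₀, ∞)` satisfies `f(r) ≤ -(r/a) f'(r) + C₂ r^{-b}`, then
`f(r) ≤ C₃ r^{-a} + (a C₂/(a-b)) r^{-b}`; in particular `f(r) = O(r^{-min(a,b)})`. -/
theorem ode_decay_neq
    (a b C2 r0 : ℝ) (ha : 0 < a) (hb : 0 < b) (hab : a ≠ b) (hC2 : 0 ≤ C2)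
    (hr0 : 0 < r0) (f : ℝ → ℝ)
    (hf0 : ∀ r, r0 ≤ r → 0 ≤ f r)
    (hdiff : ∀ r, r0 ≤ r → DifferentiableAt ℝ f r)
    (hineq : ∀ r, r0 ≤ r → f r ≤ -(r / a) * deriv f r + C2 * r ^ (-b)) :
    (∃ C3 : ℝ, ∀ r, r0 ≤ r → f r ≤ C3 * r ^ (-a) + (a * C2 / (a - b)) * r ^ (-b)) ∧
      f =O[atTop] fun r : ℝ => r ^ (-min a b) :=
  ode_decay_neq_general a b C2 r0 ha hab hr0 f hf0 hdiff hineq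
end

section
/- Let a > 0 and C_2 ≥ 0. Suppose f : [r_0, ∞) → ℝ is a differentiable function with f(r) ≥ 0 satisfying f(r) ≤ -(r/a) f'(r) + C_2 r^{-a} for all r ≥ r_0 > 1. Then there exists a constant C_3 such that f(r) ≤ C_3 r^{-a} + a C_2 r^{-a} ln r for all r ≥ r_0; in particular f(r) = O(r^{-a} ln r) as r → ∞. -/
open Filter Asymptotics

/-- **ODE Lemma, case (b).** If `a > 0`, `C₂ ≥ 0` and a differentiable `f ≥ 0` on
`[r₀, ∞)` with `r₀ > 1` satisfies `f(r) ≤ -(r/a) f'(r) + C₂ r^{-a}`, then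
`f(r) ≤ C₃ r^{-a} + a C₂ r^{-a} ln r`; in particular `f(r) = O(r^{-a} ln r)`. -/
theorem ode_decay_eq
    (a C2 r0 : ℝ) (ha : 0 < a) (hC2 : 0 ≤ C2)
    (hr0 : 1 < r0) (f : ℝ → ℝ)
    (hf0 : ∀ r, r0 ≤ r → 0 ≤ f r)
    (hdiff : ∀ r, r0 ≤ r → DifferentiableAt ℝ f r)
    (hineq : ∀ r, r0 ≤ r → f r ≤ -(r / a) * deriv f r + C2 * r ^ (-a)) :
    (∃ C3 : ℝ, ∀ r, r0 ≤ r → f r ≤ C3 * r ^ (-a) + a * C2 * r ^ (-a) * Real.log r) ∧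
      f =O[atTop] fun r : ℝ => r ^ (-a) * Real.log r := by
  have hr0pos : (0:ℝ) < r0 := lt_trans one_pos hr0
  set g : ℝ → ℝ := fun r => r ^ a * f r - a * C2 * Real.log r with hg
  -- derivative data for g at points r ≥ r0
  have hgderiv : ∀ r, r0 ≤ r →
      HasDerivAt g (a * r ^ (a-1) * f r + r ^ a * deriv f r - a * C2 * r⁻¹) r := by
    intro r hr
    have hrpos : (0:ℝ) < r := lt_of_lt_of_le hr0pos hr
    have h1 : HasDerivAt (fun x : ℝ => x ^ a) (a * r ^ (a-1)) r :=
      Real.hasDerivAt_rpow_const (Or.inl hrpos.ne')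
    have h2 := (hdiff r hr).hasDerivAt
    have h3 := (Real.hasDerivAt_log hrpos.ne').const_mul (a * C2)
    exact (h1.mul h2).sub h3
  have hganti : AntitoneOn g (Set.Ici r0) := by
    apply antitoneOn_of_deriv_nonpos (convex_Ici r0)
    · intro r hr
      exact ((hgderiv r hr).continuousAt).continuousWithinAt
    · intro r hr
      rw [interior_Ici] at hr
      exact ((hgderiv r hr.le).differentiableAt).differentiableWithinAt
    · intro r hr
      rw [interior_Ici] at hr
      have hrle : r0 ≤ r := hr.le
      have hrpos : (0:ℝ) < r := lt_of_lt_of_le hr0pos hrle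
      rw [(hgderiv r hrle).deriv]
      have hu : (0:ℝ) < r ^ a := Real.rpow_pos_of_pos hrpos a
      have hpow : r ^ (a-1) = r ^ a / r := by
        rw [Real.rpow_sub hrpos, Real.rpow_one]
      have hpowneg : r ^ (-a) = (r ^ a)⁻¹ := Real.rpow_neg hrpos.le a
      have key := hineq r hrle
      rw [hpowneg] at key
      have hmul := mul_le_mul_of_nonneg_left key (le_of_lt (mul_pos ha hu))
      field_simp at hmul
      have hnum : a * r ^ a * f r + r ^ a * deriv f r * r - a * C2 ≤ 0 := by linarith
      have heq : a * r ^ (a-1) * f r + r ^ a * deriv f r - a * C2 * r⁻¹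
          = (a * r ^ a * f r + r ^ a * deriv f r * r - a * C2) / r := by
        rw [hpow]; field_simp
      rw [heq]
      exact div_nonpos_of_nonpos_of_nonneg hnum hrpos.le
  have hbound : ∀ r, r0 ≤ r →
      f r ≤ g r0 * r ^ (-a) + a * C2 * r ^ (-a) * Real.log r := by
    intro r hr
    have hrpos : (0:ℝ) < r := lt_of_lt_of_le hr0pos hr
    have hu : (0:ℝ) < r ^ a := Real.rpow_pos_of_pos hrpos a
    have h : g r ≤ g r0 := hganti (Set.self_mem_Ici) (Set.mem_Ici.mpr hr) hr
    have h2 : r ^ a * f r ≤ g r0 + a * C2 * Real.log r := by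
      simp only [hg] at h ⊢; linarith
    have hpowneg : r ^ (-a) = (r ^ a)⁻¹ := Real.rpow_neg hrpos.le a
    rw [hpowneg]
    calc f r = (r ^ a * f r) * (r ^ a)⁻¹ := by field_simp
      _ ≤ (g r0 + a * C2 * Real.log r) * (r ^ a)⁻¹ :=
          mul_le_mul_of_nonneg_right h2 (inv_nonneg.mpr hu.le)
      _ = g r0 * (r ^ a)⁻¹ + a * C2 * (r ^ a)⁻¹ * Real.log r := by ring
  refine ⟨⟨g r0, hbound⟩, ?_⟩
  rw [isBigO_iff]
  refine ⟨|g r0| + a * C2, ?_⟩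
  filter_upwards [eventually_ge_atTop (max r0 (Real.exp 1))] with r hr
  have hr1 : r0 ≤ r := le_trans (le_max_left _ _) hr
  have hrpos : (0:ℝ) < r := lt_of_lt_of_le hr0pos hr1
  have hlog : 1 ≤ Real.log r := by
    rw [← Real.log_exp 1]
    exact Real.log_le_log (Real.exp_pos 1) (le_trans (le_max_right _ _) hr)
  have hlogpos : 0 < Real.log r := lt_of_lt_of_le one_pos hlog
  have hu : (0:ℝ) < r ^ (-a) := Real.rpow_pos_of_pos hrpos _
  rw [Real.norm_eq_abs, Real.norm_eq_abs,
    abs_of_nonneg (hf0 r hr1), abs_of_nonneg (by positivity : (0:ℝ) ≤ r ^ (-a) * Real.log r)]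
  have h1 : g r0 * r ^ (-a) ≤ |g r0| * (r ^ (-a) * Real.log r) :=
    calc g r0 * r ^ (-a) ≤ |g r0| * r ^ (-a) :=
          mul_le_mul_of_nonneg_right (le_abs_self _) hu.le
      _ ≤ |g r0| * (r ^ (-a) * Real.log r) :=
          mul_le_mul_of_nonneg_left (le_mul_of_one_le_right hu.le hlog) (abs_nonneg _)
  calc f r ≤ g r0 * r ^ (-a) + a * C2 * r ^ (-a) * Real.log r := hbound r hr1
    _ ≤ |g r0| * (r ^ (-a) * Real.log r) + a * C2 * (r ^ (-a) * Real.log r) := by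
        nlinarith
    _ = (|g r0| + a * C2) * (r ^ (-a) * Real.log r) := by ring
end
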